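/- Let {P̂,Ŷ} be a k-partition-with-sinks and assume some worst-case scenario for {P̂,Ŷ} exists. Then there exists a worst-case scenario s* for {P̂,Ŷ} such that, writing P_d = {l_d,...,r_d} for the dominant part of {P̂,Ŷ} under s*: (1) w_i(s*) = w_i⁻ for every vertex index i not in P_d, and (2) the restriction of s* to {l_d,...,r_d} is left-dominant or right-dominant on {l_d,...,r_d}. -/
import Mathlib


/-- Maximum of `f` over a finite set of indices, with the empty maximum being `0`. -/
noncomputable def maxOver (S : Finset ℕ) (f : ℕ → ℝ) : ℝ := S.fold max 0 f

/-- Left evacuation time to sink `x t` of the subpath starting at `x l`, under weights `w`. -/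
noncomputable def thetaL (x : ℕ → ℝ) (τ : ℝ) (w : ℕ → ℝ) (l t : ℕ) : ℝ :=
  maxOver (Finset.Ico l t) (fun i => (x t - x i) * τ + ∑ j ∈ Finset.Icc l i, w j)

/-- Right evacuation time to sink `x t` of the subpath ending at `x r`, under weights `w`. -/
noncomputable def thetaR (x : ℕ → ℝ) (τ : ℝ) (w : ℕ → ℝ) (t r : ℕ) : ℝ :=
  maxOver (Finset.Ioc t r) (fun i => (x i - x t) * τ + ∑ j ∈ Finset.Icc i r, w j)

/-- 1-sink evacuation time `Θ¹([x_l,x_r], x_t, w)`. -/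
noncomputable def theta1 (x : ℕ → ℝ) (τ : ℝ) (w : ℕ → ℝ) (l t r : ℕ) : ℝ :=
  max (thetaL x τ w l t) (thetaR x τ w t r)

/-- A scenario assigns each vertex a weight within its bounds. -/
def IsScenario (n : ℕ) (wlo whi : ℕ → ℝ) (s : ℕ → ℝ) : Prop :=
  ∀ i, i ≤ n → wlo i ≤ s i ∧ s i ≤ whi i

/-- A `k`-partition-with-sinks of the vertex set `{0,…,n}` into `k` consecutive
nonempty blocks `{l p, …, r p}` (`p ∈ {1,…,k}`) with a sink `t p` in each block. -/
structure KPartSinks (n k : ℕ) where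
  l : ℕ → ℕ
  r : ℕ → ℕ
  t : ℕ → ℕ
  first : l 1 = 0
  last : r k = n
  consec : ∀ p, 1 ≤ p → p < k → l (p + 1) = r p + 1
  block_nonempty : ∀ p, 1 ≤ p → p ≤ k → l p ≤ r p
  sink_lb : ∀ p, 1 ≤ p → p ≤ k → l p ≤ t p
  sink_ub : ∀ p, 1 ≤ p → p ≤ k → t p ≤ r p

/-- `k`-sink evacuation time `Θᵏ(P, {P̂,Ŷ}, w)`. -/
noncomputable def thetaK {n k : ℕ} (x : ℕ → ℝ) (τ : ℝ) (PY : KPartSinks n k) (w : ℕ → ℝ) : ℝ :=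
  maxOver (Finset.Icc 1 k) (fun p => theta1 x τ w (PY.l p) (PY.t p) (PY.r p))

/-- Optimal `k`-sink evacuation time `Θᵏ_opt(P, w)`. -/
noncomputable def thetaOpt (x : ℕ → ℝ) (τ : ℝ) (n k : ℕ) (w : ℕ → ℝ) : ℝ :=
  sInf {v : ℝ | ∃ PY : KPartSinks n k, thetaK x τ PY w = v}

/-- Regret `R({P̂,Ŷ}, w)`. -/
noncomputable def regret {n k : ℕ} (x : ℕ → ℝ) (τ : ℝ) (PY : KPartSinks n k) (w : ℕ → ℝ) : ℝ :=
  thetaK x τ PY w - thetaOpt x τ n k w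

/-- Max-regret `R_max({P̂,Ŷ})`. -/
noncomputable def maxRegret {n k : ℕ} (x : ℕ → ℝ) (τ : ℝ) (wlo whi : ℕ → ℝ)
    (PY : KPartSinks n k) : ℝ :=
  sSup {v : ℝ | ∃ s : ℕ → ℝ, IsScenario n wlo whi s ∧ regret x τ PY s = v}

/-- A worst-case scenario: a scenario attaining the max-regret. -/
def IsWorstCase {n k : ℕ} (x : ℕ → ℝ) (τ : ℝ) (wlo whi : ℕ → ℝ) (PY : KPartSinks n k)
    (s : ℕ → ℝ) : Prop :=
  IsScenario n wlo whi s ∧ regret x τ PY s = maxRegret x τ wlo whi PY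

/-- `d` is the index of the dominant part of `{P̂,Ŷ}` under weights `w`:
the smallest index attaining `max_p Θ¹(P_p, y_p, w)`. -/
def IsDominant {n k : ℕ} (x : ℕ → ℝ) (τ : ℝ) (PY : KPartSinks n k) (w : ℕ → ℝ) (d : ℕ) : Prop :=
  1 ≤ d ∧ d ≤ k ∧
  (∀ p, 1 ≤ p → p ≤ k →
    theta1 x τ w (PY.l p) (PY.t p) (PY.r p) ≤ theta1 x τ w (PY.l d) (PY.t d) (PY.r d)) ∧
  (∀ p, 1 ≤ p → p < d →
    theta1 x τ w (PY.l p) (PY.t p) (PY.r p) < theta1 x τ w (PY.l d) (PY.t d) (PY.r d))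

/-- `R_{lr}(x_t)`: the max-regret of the subpath `[x_l,x_r]` as assumed dominant
part with sink `x_t`. -/
noncomputable def Rsink (x : ℕ → ℝ) (τ : ℝ) (wlo whi : ℕ → ℝ) (n k : ℕ) (l r t : ℕ) : ℝ :=
  sSup {v : ℝ | ∃ s : ℕ → ℝ, IsScenario n wlo whi s ∧
    theta1 x τ s l t r - thetaOpt x τ n k s = v}

/-- `R_{lr}`: the minimax regret of the subpath `[x_l,x_r]` as assumed dominant part. -/
noncomputable def Rlr (x : ℕ → ℝ) (τ : ℝ) (wlo whi : ℕ → ℝ) (n k : ℕ) (l r : ℕ) : ℝ :=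
  sInf {v : ℝ | ∃ t, l ≤ t ∧ t ≤ r ∧ Rsink x τ wlo whi n k l r t = v}

/-- A partition of `{0,…,i}` into `q` consecutive nonempty blocks `{l p, …, r p}`. -/
def IsQPartition (q i : ℕ) (l r : ℕ → ℕ) : Prop :=
  l 1 = 0 ∧ r q = i ∧ (∀ p, 1 ≤ p → p < q → l (p + 1) = r p + 1) ∧
  (∀ p, 1 ≤ p → p ≤ q → l p ≤ r p)

/-- `M(q, i)`: the minimum over partitions of `{0,…,i}` into `q` consecutive
nonempty blocks of `max_p R_{l_p r_p}`. -/
noncomputable def Mreg (x : ℕ → ℝ) (τ : ℝ) (wlo whi : ℕ → ℝ) (n k : ℕ) (q i : ℕ) : ℝ :=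
  sInf {v : ℝ | ∃ lf rf : ℕ → ℕ, IsQPartition q i lf rf ∧
    maxOver (Finset.Icc 1 q) (fun p => Rlr x τ wlo whi n k (lf p) (rf p)) = v}

/-- Left-dominant scenario on `{l,…,r}`. -/
def LeftDominant (wlo whi s : ℕ → ℝ) (l r : ℕ) : Prop :=
  ∃ i, l ≤ i ∧ i ≤ r + 1 ∧ (∀ j, l ≤ j → j < i → s j = whi j) ∧
    (∀ j, i ≤ j → j ≤ r → s j = wlo j)

/-- Right-dominant scenario on `{l,…,r}`. -/
def RightDominant (wlo whi s : ℕ → ℝ) (l r : ℕ) : Prop :=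
  ∃ i, l ≤ i ∧ i ≤ r + 1 ∧ (∀ j, l ≤ j → j < i → s j = wlo j) ∧
    (∀ j, i ≤ j → j ≤ r → s j = whi j)

section Helpers

lemma maxOver_nonneg (S : Finset ℕ) (f : ℕ → ℝ) : 0 ≤ maxOver S f :=
  (Finset.le_fold_max 0).2 (Or.inl le_rfl)

lemma le_maxOver {S : Finset ℕ} {f : ℕ → ℝ} {i : ℕ} (h : i ∈ S) : f i ≤ maxOver S f :=
  (Finset.le_fold_max _).2 (Or.inr ⟨i, h, le_rfl⟩)

lemma maxOver_le {S : Finset ℕ} {f : ℕ → ℝ} {a : ℝ} (h0 : 0 ≤ a) (h : ∀ i ∈ S, f i ≤ a) :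
    maxOver S f ≤ a := (Finset.fold_max_le a).2 ⟨h0, h⟩

lemma maxOver_pos_attained {S : Finset ℕ} {f : ℕ → ℝ} (h : 0 < maxOver S f) :
    ∃ i ∈ S, f i = maxOver S f ∧ ∀ j ∈ S, f j ≤ f i := by
  rcases S.eq_empty_or_nonempty with rfl | hne
  · simp [maxOver, Finset.fold_empty] at h
  · obtain ⟨i, hi, hmax⟩ := S.exists_max_image f hne
    refine ⟨i, hi, ?_, hmax⟩
    have h1 : maxOver S f ≤ max 0 (f i) :=
      maxOver_le (le_max_left _ _) (fun j hj => le_trans (hmax j hj) (le_max_right _ _))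
    have h2 : f i ≤ maxOver S f := le_maxOver hi
    rcases max_cases 0 (f i) with ⟨he, _⟩ | ⟨he, _⟩
    · rw [he] at h1; linarith
    · rw [he] at h1; linarith

lemma maxOver_mono {S : Finset ℕ} {f g : ℕ → ℝ} (h : ∀ i ∈ S, f i ≤ g i) :
    maxOver S f ≤ maxOver S g :=
  maxOver_le (maxOver_nonneg _ _) (fun i hi => le_trans (h i hi) (le_maxOver hi))

lemma theta1_nonneg (x : ℕ → ℝ) (τ : ℝ) (w : ℕ → ℝ) (l t r : ℕ) :
    0 ≤ theta1 x τ w l t r :=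
  le_trans (maxOver_nonneg _ _) (le_max_left _ _)

lemma theta1_congr {x : ℕ → ℝ} {τ : ℝ} {s w : ℕ → ℝ} {l t r : ℕ}
    (hlt : l ≤ t) (htr : t ≤ r)
    (h : ∀ j, l ≤ j → j ≤ r → s j = w j) :
    theta1 x τ s l t r = theta1 x τ w l t r := by
  unfold theta1 thetaL thetaR
  congr 1
  · apply Finset.fold_congr
    intro i hi
    rw [Finset.mem_Ico] at hi
    congr 1
    apply Finset.sum_congr rfl
    intro j hj
    rw [Finset.mem_Icc] at hj
    exact h j hj.1 (by omega)
  · apply Finset.fold_congr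
    intro i hi
    rw [Finset.mem_Ioc] at hi
    congr 1
    apply Finset.sum_congr rfl
    intro j hj
    rw [Finset.mem_Icc] at hj
    exact h j (by omega) hj.2

/-- Block-local monotonicity of `theta1`. -/
lemma theta1_mono {x : ℕ → ℝ} {τ : ℝ} {s₁ s₂ : ℕ → ℝ} {l t r : ℕ}
    (hlt : l ≤ t) (htr : t ≤ r)
    (h : ∀ j, l ≤ j → j ≤ r → s₂ j ≤ s₁ j) :
    theta1 x τ s₂ l t r ≤ theta1 x τ s₁ l t r := by
  unfold theta1 thetaL thetaR
  apply max_le_max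
  · apply maxOver_mono
    intro i hi
    rw [Finset.mem_Ico] at hi
    have : ∑ j ∈ Finset.Icc l i, s₂ j ≤ ∑ j ∈ Finset.Icc l i, s₁ j := by
      apply Finset.sum_le_sum
      intro j hj
      rw [Finset.mem_Icc] at hj
      exact h j hj.1 (by omega)
    linarith
  · apply maxOver_mono
    intro i hi
    rw [Finset.mem_Ioc] at hi
    have : ∑ j ∈ Finset.Icc i r, s₂ j ≤ ∑ j ∈ Finset.Icc i r, s₁ j := by
      apply Finset.sum_le_sum
      intro j hj
      rw [Finset.mem_Icc] at hj
      exact h j (by omega) hj.2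
    linarith

/-- Shift bound: if `s₂ ≤ s₁ + δ` pointwise on `[0,n]` with `δ ≥ 0` there, then
`theta1` increases by at most the total of `δ` over `[0,n]`. -/
lemma theta1_shift {x : ℕ → ℝ} {τ : ℝ} {s₁ s₂ δ : ℕ → ℝ} {n l t r : ℕ}
    (hδ : ∀ j, j ≤ n → s₂ j ≤ s₁ j + δ j) (hδ0 : ∀ j, j ≤ n → 0 ≤ δ j)
    (htr : t ≤ r) (hrn : r ≤ n) :
    theta1 x τ s₂ l t r ≤ theta1 x τ s₁ l t r + ∑ j ∈ Finset.Icc 0 n, δ j := by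
  set D := ∑ j ∈ Finset.Icc 0 n, δ j with hDdef
  have hD0 : 0 ≤ D := Finset.sum_nonneg (fun j hj => hδ0 j (Finset.mem_Icc.1 hj).2)
  have key : ∀ a b : ℕ, b ≤ n →
      ∑ j ∈ Finset.Icc a b, s₂ j ≤ ∑ j ∈ Finset.Icc a b, s₁ j + D := by
    intro a b hbn
    calc ∑ j ∈ Finset.Icc a b, s₂ j ≤ ∑ j ∈ Finset.Icc a b, (s₁ j + δ j) :=
          Finset.sum_le_sum (fun j hj => hδ j (le_trans (Finset.mem_Icc.1 hj).2 hbn))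
      _ = ∑ j ∈ Finset.Icc a b, s₁ j + ∑ j ∈ Finset.Icc a b, δ j := Finset.sum_add_distrib
      _ ≤ ∑ j ∈ Finset.Icc a b, s₁ j + D := by
          gcongr
          exact Finset.sum_le_sum_of_subset_of_nonneg
            (Finset.Icc_subset_Icc (Nat.zero_le _) hbn)
            (fun i hi _ => hδ0 i (Finset.mem_Icc.1 hi).2)
  have hL : thetaL x τ s₂ l t ≤ thetaL x τ s₁ l t + D := by
    have h0 : (0:ℝ) ≤ thetaL x τ s₁ l t := maxOver_nonneg _ _
    unfold thetaL
    apply maxOver_le (by unfold thetaL at h0; linarith)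
    intro i hi
    rw [Finset.mem_Ico] at hi
    have hk := key l i (by omega)
    have hmem : (x t - x i) * τ + ∑ j ∈ Finset.Icc l i, s₁ j ≤
        maxOver (Finset.Ico l t) (fun i => (x t - x i) * τ + ∑ j ∈ Finset.Icc l i, s₁ j) :=
      le_maxOver (f := fun i => (x t - x i) * τ + ∑ j ∈ Finset.Icc l i, s₁ j)
        (Finset.mem_Ico.2 hi)
    linarith
  have hR : thetaR x τ s₂ t r ≤ thetaR x τ s₁ t r + D := by
    have h0 : (0:ℝ) ≤ thetaR x τ s₁ t r := maxOver_nonneg _ _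
    unfold thetaR
    apply maxOver_le (by unfold thetaR at h0; linarith)
    intro i hi
    rw [Finset.mem_Ioc] at hi
    have hk := key i r hrn
    have hmem : (x i - x t) * τ + ∑ j ∈ Finset.Icc i r, s₁ j ≤
        maxOver (Finset.Ioc t r) (fun i => (x i - x t) * τ + ∑ j ∈ Finset.Icc i r, s₁ j) :=
      le_maxOver (f := fun i => (x i - x t) * τ + ∑ j ∈ Finset.Icc i r, s₁ j)
        (Finset.mem_Ioc.2 hi)
    linarith
  calc theta1 x τ s₂ l t r = max (thetaL x τ s₂ l t) (thetaR x τ s₂ t r) := rfl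
    _ ≤ max (thetaL x τ s₁ l t + D) (thetaR x τ s₁ t r + D) := max_le_max hL hR
    _ = theta1 x τ s₁ l t r + D := (max_add_add_right _ _ _)

lemma KPartSinks.r_mono {n k : ℕ} (PY : KPartSinks n k) :
    ∀ q, q ≤ k → ∀ p, 1 ≤ p → p ≤ q → PY.r p ≤ PY.r q := by
  intro q
  induction q with
  | zero => intro _ p h1 h2; omega
  | succ q ih =>
    intro hqk p h1 h2
    rcases Nat.lt_or_ge p (q + 1) with h | h
    · have hpq : p ≤ q := by omega
      have h1q : 1 ≤ q := by omega
      have hle := ih (by omega) p h1 hpq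
      have hc := PY.consec q h1q (by omega)
      have hb := PY.block_nonempty (q + 1) (by omega) hqk
      omega
    · have hp : p = q + 1 := by omega
      rw [hp]

lemma KPartSinks.r_le_n {n k : ℕ} (PY : KPartSinks n k) {p : ℕ} (h1 : 1 ≤ p) (h2 : p ≤ k) :
    PY.r p ≤ n := by
  have := PY.r_mono k le_rfl p h1 h2
  rw [PY.last] at this
  exact this

/-- Distinct blocks are disjoint. -/
lemma KPartSinks.block_disjoint {n k : ℕ} (PY : KPartSinks n k) {p d j : ℕ}
    (hp1 : 1 ≤ p) (hpk : p ≤ k) (hd1 : 1 ≤ d) (hdk : d ≤ k) (hne : p ≠ d)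
    (hj1 : PY.l p ≤ j) (hj2 : j ≤ PY.r p) : j < PY.l d ∨ PY.r d < j := by
  rcases Nat.lt_or_ge p d with h | h
  · left
    have hc := PY.consec (d - 1) (by omega) (by omega)
    have hd' : d - 1 + 1 = d := by omega
    rw [hd'] at hc
    have hr := PY.r_mono (d - 1) (by omega) p hp1 (by omega)
    omega
  · right
    have hpd : d < p := by omega
    have hc := PY.consec (p - 1) (by omega) (by omega)
    have hp' : p - 1 + 1 = p := by omega
    rw [hp'] at hc
    have hr := PY.r_mono (p - 1) (by omega) d hd1 (by omega)
    omega

lemma thetaK_nonneg {n k : ℕ} (x : ℕ → ℝ) (τ : ℝ) (PY : KPartSinks n k) (w : ℕ → ℝ) :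
    0 ≤ thetaK x τ PY w := maxOver_nonneg _ _

lemma thetaK_shift {n k : ℕ} (x : ℕ → ℝ) (τ : ℝ) (PY : KPartSinks n k) {s₁ s₂ δ : ℕ → ℝ}
    (hδ : ∀ j, j ≤ n → s₂ j ≤ s₁ j + δ j) (hδ0 : ∀ j, j ≤ n → 0 ≤ δ j) :
    thetaK x τ PY s₂ ≤ thetaK x τ PY s₁ + ∑ j ∈ Finset.Icc 0 n, δ j := by
  have hD0 : (0:ℝ) ≤ ∑ j ∈ Finset.Icc 0 n, δ j :=
    Finset.sum_nonneg (fun j hj => hδ0 j (Finset.mem_Icc.1 hj).2)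
  unfold thetaK
  apply maxOver_le (add_nonneg (maxOver_nonneg _ _) hD0)
  intro p hp
  rw [Finset.mem_Icc] at hp
  have h1 := theta1_shift (x := x) (τ := τ) (l := PY.l p) hδ hδ0
    (PY.sink_ub p hp.1 hp.2) (PY.r_le_n hp.1 hp.2)
  have h2 : theta1 x τ s₁ (PY.l p) (PY.t p) (PY.r p) ≤
      maxOver (Finset.Icc 1 k) (fun p => theta1 x τ s₁ (PY.l p) (PY.t p) (PY.r p)) :=
    le_maxOver (f := fun p => theta1 x τ s₁ (PY.l p) (PY.t p) (PY.r p)) (Finset.mem_Icc.2 hp)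
  linarith

lemma thetaOpt_nonneg (x : ℕ → ℝ) (τ : ℝ) {n k : ℕ} (PY : KPartSinks n k) (w : ℕ → ℝ) :
    0 ≤ thetaOpt x τ n k w := by
  unfold thetaOpt
  have hne : {v : ℝ | ∃ PY' : KPartSinks n k, thetaK x τ PY' w = v}.Nonempty :=
    ⟨thetaK x τ PY w, PY, rfl⟩
  refine le_csInf hne ?_
  rintro b ⟨PY', rfl⟩
  exact thetaK_nonneg x τ PY' w

lemma thetaOpt_le_thetaK (x : ℕ → ℝ) (τ : ℝ) {n k : ℕ} (PY' : KPartSinks n k) (w : ℕ → ℝ) :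
    thetaOpt x τ n k w ≤ thetaK x τ PY' w := by
  unfold thetaOpt
  have hmem : thetaK x τ PY' w ∈ {v : ℝ | ∃ PY'' : KPartSinks n k, thetaK x τ PY'' w = v} :=
    ⟨PY', rfl⟩
  have hbdd : BddBelow {v : ℝ | ∃ PY'' : KPartSinks n k, thetaK x τ PY'' w = v} := by
    refine ⟨0, ?_⟩
    rintro b ⟨PY'', rfl⟩
    exact thetaK_nonneg x τ PY'' w
  exact csInf_le hbdd hmem

lemma thetaOpt_shift (x : ℕ → ℝ) (τ : ℝ) {n k : ℕ} (PY : KPartSinks n k) {s₁ s₂ δ : ℕ → ℝ}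
    (hδ : ∀ j, j ≤ n → s₂ j ≤ s₁ j + δ j) (hδ0 : ∀ j, j ≤ n → 0 ≤ δ j) :
    thetaOpt x τ n k s₂ ≤ thetaOpt x τ n k s₁ + ∑ j ∈ Finset.Icc 0 n, δ j := by
  set D := ∑ j ∈ Finset.Icc 0 n, δ j with hDdef
  have key : thetaOpt x τ n k s₂ - D ≤ thetaOpt x τ n k s₁ := by
    conv_rhs => unfold thetaOpt
    have hne : {v : ℝ | ∃ PY' : KPartSinks n k, thetaK x τ PY' s₁ = v}.Nonempty :=
      ⟨thetaK x τ PY s₁, PY, rfl⟩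
    refine le_csInf hne ?_
    rintro b ⟨PY', rfl⟩
    have h1 := thetaOpt_le_thetaK x τ PY' s₂
    have h2 := thetaK_shift x τ PY' hδ hδ0
    rw [← hDdef] at h2
    linarith
  linarith

lemma regret_le_maxRegret {n k : ℕ} (x : ℕ → ℝ) (τ : ℝ) (wlo whi : ℕ → ℝ)
    (PY : KPartSinks n k) {s : ℕ → ℝ} (hs : IsScenario n wlo whi s) :
    regret x τ PY s ≤ maxRegret x τ wlo whi PY := by
  unfold maxRegret
  have hmem : regret x τ PY s ∈
      {v : ℝ | ∃ s' : ℕ → ℝ, IsScenario n wlo whi s' ∧ regret x τ PY s' = v} := ⟨s, hs, rfl⟩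
  refine le_csSup ?_ hmem
  refine ⟨thetaK x τ PY whi, ?_⟩
  rintro b ⟨s', hs', rfl⟩
  have h1 : thetaK x τ PY s' ≤ thetaK x τ PY whi + ∑ j ∈ Finset.Icc 0 n, (0:ℝ) := by
    apply thetaK_shift x τ PY (δ := fun _ => (0:ℝ))
    · intro j hj
      have := (hs' j hj).2
      simp only [add_zero]
      exact this
    · intro j _; exact le_rfl
  rw [Finset.sum_const, smul_zero, add_zero] at h1
  have h2 := thetaOpt_nonneg x τ PY s'
  unfold regret
  linarith

lemma exists_dominant {n k : ℕ} (x : ℕ → ℝ) (τ : ℝ) (PY : KPartSinks n k) (w : ℕ → ℝ)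
    (hk : 1 ≤ k) : ∃ d, IsDominant x τ PY w d := by
  classical
  set f : ℕ → ℝ := fun p => theta1 x τ w (PY.l p) (PY.t p) (PY.r p) with hf
  have hne : (Finset.Icc 1 k).Nonempty := ⟨1, Finset.mem_Icc.2 ⟨le_rfl, hk⟩⟩
  obtain ⟨d₀, hd₀mem, hd₀⟩ := (Finset.Icc 1 k).exists_max_image f hne
  rw [Finset.mem_Icc] at hd₀mem
  have hP : ∃ p, 1 ≤ p ∧ p ≤ k ∧ ∀ q, 1 ≤ q → q ≤ k → f q ≤ f p := by
    exact ⟨d₀, hd₀mem.1, hd₀mem.2, fun q h1 h2 => hd₀ q (Finset.mem_Icc.2 ⟨h1, h2⟩)⟩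
  set d := Nat.find hP with hd
  have hPd := Nat.find_spec hP
  refine ⟨d, hPd.1, hPd.2.1, fun p hp1 hpk => hPd.2.2 p hp1 hpk, ?_⟩
  intro p hp1 hpd
  have hnp := Nat.find_min hP hpd
  have hpk : p ≤ k := le_trans (le_of_lt hpd) hPd.2.1
  simp only [not_and, not_forall, not_le] at hnp
  obtain ⟨q, hq1, hq2, hq3⟩ := hnp hp1 hpk
  exact lt_of_lt_of_le hq3 (hPd.2.2 q hq1 hq2)

lemma thetaK_eq_dominant {n k : ℕ} {x : ℕ → ℝ} {τ : ℝ} {PY : KPartSinks n k} {w : ℕ → ℝ}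
    {d : ℕ} (hd : IsDominant x τ PY w d) :
    thetaK x τ PY w = theta1 x τ w (PY.l d) (PY.t d) (PY.r d) := by
  unfold thetaK
  apply le_antisymm
  · apply maxOver_le (theta1_nonneg _ _ _ _ _ _)
    intro p hp
    rw [Finset.mem_Icc] at hp
    exact hd.2.2.1 p hp.1 hp.2
  · exact le_maxOver (f := fun p => theta1 x τ w (PY.l p) (PY.t p) (PY.r p))
      (Finset.mem_Icc.2 ⟨hd.1, hd.2.1⟩)

/-- The key step: a modification of a worst-case scenario that increases the
dominant block's `theta1` by `D`, increases `thetaOpt` by at most `D`, and does not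
increase the other blocks' `theta1`, is again worst-case with the same dominant part. -/
lemma improve {n k : ℕ} {x : ℕ → ℝ} {τ : ℝ} {wlo whi : ℕ → ℝ} {PY : KPartSinks n k}
    {s₁ s₂ : ℕ → ℝ} {d : ℕ} {D : ℝ}
    (hw1 : IsWorstCase x τ wlo whi PY s₁) (hd : IsDominant x τ PY s₁ d)
    (hs₂ : IsScenario n wlo whi s₂) (hD : 0 ≤ D)
    (hopt : thetaOpt x τ n k s₂ ≤ thetaOpt x τ n k s₁ + D)
    (hblk : theta1 x τ s₁ (PY.l d) (PY.t d) (PY.r d) + D ≤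
            theta1 x τ s₂ (PY.l d) (PY.t d) (PY.r d))
    (hoth : ∀ p, 1 ≤ p → p ≤ k → p ≠ d →
      theta1 x τ s₂ (PY.l p) (PY.t p) (PY.r p) ≤ theta1 x τ s₁ (PY.l p) (PY.t p) (PY.r p)) :
    IsWorstCase x τ wlo whi PY s₂ ∧ IsDominant x τ PY s₂ d := by
  have hd2 : IsDominant x τ PY s₂ d := by
    refine ⟨hd.1, hd.2.1, ?_, ?_⟩
    · intro p hp1 hpk
      by_cases hpd : p = d
      · rw [hpd]
      · calc theta1 x τ s₂ (PY.l p) (PY.t p) (PY.r p)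
            ≤ theta1 x τ s₁ (PY.l p) (PY.t p) (PY.r p) := hoth p hp1 hpk hpd
          _ ≤ theta1 x τ s₁ (PY.l d) (PY.t d) (PY.r d) := hd.2.2.1 p hp1 hpk
          _ ≤ theta1 x τ s₂ (PY.l d) (PY.t d) (PY.r d) := by linarith
    · intro p hp1 hpd
      have hpk : p ≤ k := le_trans (le_of_lt hpd) hd.2.1
      calc theta1 x τ s₂ (PY.l p) (PY.t p) (PY.r p)
          ≤ theta1 x τ s₁ (PY.l p) (PY.t p) (PY.r p) := hoth p hp1 hpk (by omega)
        _ < theta1 x τ s₁ (PY.l d) (PY.t d) (PY.r d) := hd.2.2.2 p hp1 hpd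
        _ ≤ theta1 x τ s₂ (PY.l d) (PY.t d) (PY.r d) := by linarith
  refine ⟨⟨hs₂, ?_⟩, hd2⟩
  have hK1 := thetaK_eq_dominant hd
  have hK2 := thetaK_eq_dominant hd2
  have hge : regret x τ PY s₁ ≤ regret x τ PY s₂ := by
    unfold regret
    rw [hK1, hK2]
    linarith
  have hle := regret_le_maxRegret x τ wlo whi PY hs₂
  have h1 := hw1.2
  linarith [le_antisymm hle (h1 ▸ hge)]

end Helpers

/-- there is a worst-case scenario that takes the lower bound
outside its dominant part and is left- or right-dominant on the dominant part. -/
theorem stmt_2 (n k : ℕ) (x : ℕ → ℝ) (τ : ℝ) (wlo whi : ℕ → ℝ)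
    (hx : ∀ i, i < n → x i < x (i + 1)) (hτ : 0 < τ)
    (hw : ∀ i, i ≤ n → 0 < wlo i ∧ wlo i ≤ whi i) (hk : 1 ≤ k)
    (PY : KPartSinks n k)
    (hex : ∃ s, IsWorstCase x τ wlo whi PY s) :
    ∃ s d, IsWorstCase x τ wlo whi PY s ∧ IsDominant x τ PY s d ∧
      (∀ i, i ≤ n → (i < PY.l d ∨ PY.r d < i) → s i = wlo i) ∧
      (LeftDominant wlo whi s (PY.l d) (PY.r d) ∨
       RightDominant wlo whi s (PY.l d) (PY.r d)) := by
  classical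
  obtain ⟨s₀, hs₀⟩ := hex
  obtain ⟨d, hdom⟩ := exists_dominant x τ PY s₀ hk
  have hd1 : 1 ≤ d := hdom.1
  have hdk : d ≤ k := hdom.2.1
  set l := PY.l d with hl
  set t := PY.t d with ht
  set r := PY.r d with hr
  have hlt : l ≤ t := PY.sink_lb d hd1 hdk
  have htr : t ≤ r := PY.sink_ub d hd1 hdk
  have hrn : r ≤ n := PY.r_le_n hd1 hdk
  have hs₀sc : IsScenario n wlo whi s₀ := hs₀.1
  by_cases hc : thetaR x τ s₀ t r ≤ thetaL x τ s₀ l t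
  · -- left side dominates in the dominant block
    by_cases hc2 : thetaL x τ s₀ l t ≤ 0
    · -- degenerate case: use the all-lower-bounds scenario
      have hsc2 : IsScenario n wlo whi wlo := fun i hi => ⟨le_rfl, (hw i hi).2⟩
      have hδle : ∀ j, j ≤ n → wlo j ≤ s₀ j + (fun _ : ℕ => (0:ℝ)) j := by
        intro j hj
        simpa using (hs₀sc j hj).1
      have hopt := thetaOpt_shift x τ PY hδle (fun j _ => le_rfl)
      simp only [Finset.sum_const_zero, add_zero] at hopt
      have hblk : theta1 x τ s₀ l t r + 0 ≤ theta1 x τ wlo l t r := by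
        have h1 : theta1 x τ s₀ l t r ≤ 0 := max_le hc2 (le_trans hc hc2)
        have h2 := theta1_nonneg x τ wlo l t r
        linarith
      have hoth : ∀ p, 1 ≤ p → p ≤ k → p ≠ d →
          theta1 x τ wlo (PY.l p) (PY.t p) (PY.r p) ≤
          theta1 x τ s₀ (PY.l p) (PY.t p) (PY.r p) := by
        intro p hp1 hpk _
        apply theta1_mono (PY.sink_lb p hp1 hpk) (PY.sink_ub p hp1 hpk)
        intro j _ hj2
        exact (hs₀sc j (le_trans hj2 (PY.r_le_n hp1 hpk))).1
      obtain ⟨hwc, hdm⟩ := improve hs₀ hdom hsc2 le_rfl (by linarith) hblk hoth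
      refine ⟨wlo, d, hwc, hdm, fun i _ _ => rfl,
        Or.inl ⟨l, le_rfl, by omega, fun j h1 h2 => absurd h2 (by omega), fun j _ _ => rfl⟩⟩
    · -- nondegenerate: raise the weights on the left up to a maximizer
      push_neg at hc2
      obtain ⟨i', hi'mem, hi'eq, hi'max⟩ := maxOver_pos_attained (S := Finset.Ico l t)
        (f := fun i => (x t - x i) * τ + ∑ j ∈ Finset.Icc l i, s₀ j) hc2
      rw [Finset.mem_Ico] at hi'mem
      have hi'1 : l ≤ i' := hi'mem.1
      have hi'2 : i' < t := hi'mem.2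
      have hi'n : i' ≤ n := by omega
      set s₂ : ℕ → ℝ := fun j => if l ≤ j ∧ j ≤ i' then whi j else wlo j with hs₂def
      have hΔ0 : (0:ℝ) ≤ ∑ j ∈ Finset.Icc l i', (whi j - s₀ j) := by
        apply Finset.sum_nonneg
        intro j hj
        rw [Finset.mem_Icc] at hj
        have := (hs₀sc j (by omega)).2
        linarith
      have hδsum : ∑ j ∈ Finset.Icc 0 n, (if l ≤ j ∧ j ≤ i' then whi j - s₀ j else 0) =
          ∑ j ∈ Finset.Icc l i', (whi j - s₀ j) := by
        rw [← Finset.sum_filter]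
        congr 1
        ext j
        simp only [Finset.mem_filter, Finset.mem_Icc]
        omega
      have hsc2 : IsScenario n wlo whi s₂ := by
        intro i hi
        simp only [hs₂def]
        by_cases h : l ≤ i ∧ i ≤ i'
        · rw [if_pos h]
          exact ⟨(hw i hi).2, le_rfl⟩
        · rw [if_neg h]
          exact ⟨le_rfl, (hw i hi).2⟩
      have hδle : ∀ j, j ≤ n →
          s₂ j ≤ s₀ j + (if l ≤ j ∧ j ≤ i' then whi j - s₀ j else 0) := by
        intro j hj
        simp only [hs₂def]
        by_cases h : l ≤ j ∧ j ≤ i'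
        · rw [if_pos h, if_pos h]; linarith
        · rw [if_neg h, if_neg h, add_zero]; exact (hs₀sc j hj).1
      have hδ0 : ∀ j, j ≤ n → (0:ℝ) ≤ (if l ≤ j ∧ j ≤ i' then whi j - s₀ j else 0) := by
        intro j hj
        by_cases h : l ≤ j ∧ j ≤ i'
        · rw [if_pos h]; have := (hs₀sc j hj).2; linarith
        · rw [if_neg h]
      have hopt := thetaOpt_shift x τ PY hδle hδ0
      rw [hδsum] at hopt
      have hsum2 : ∑ j ∈ Finset.Icc l i', s₂ j =
          ∑ j ∈ Finset.Icc l i', s₀ j + ∑ j ∈ Finset.Icc l i', (whi j - s₀ j) := by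
        have he : ∑ j ∈ Finset.Icc l i', s₂ j = ∑ j ∈ Finset.Icc l i', whi j := by
          apply Finset.sum_congr rfl
          intro j hj
          rw [Finset.mem_Icc] at hj
          simp only [hs₂def]
          rw [if_pos ⟨hj.1, hj.2⟩]
        rw [he, Finset.sum_sub_distrib]
        ring
      have hblk : theta1 x τ s₀ l t r + ∑ j ∈ Finset.Icc l i', (whi j - s₀ j) ≤
          theta1 x τ s₂ l t r := by
        have h1 : theta1 x τ s₀ l t r = thetaL x τ s₀ l t := max_eq_left hc
        have h2 : thetaL x τ s₀ l t = (x t - x i') * τ + ∑ j ∈ Finset.Icc l i', s₀ j :=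
          hi'eq.symm
        have h3 : (x t - x i') * τ + ∑ j ∈ Finset.Icc l i', s₂ j ≤ thetaL x τ s₂ l t :=
          le_maxOver (f := fun i => (x t - x i) * τ + ∑ j ∈ Finset.Icc l i, s₂ j)
            (Finset.mem_Ico.2 hi'mem)
        have h4 : thetaL x τ s₂ l t ≤ theta1 x τ s₂ l t r := le_max_left _ _
        rw [h1, h2]
        rw [hsum2] at h3
        linarith
      have hoth : ∀ p, 1 ≤ p → p ≤ k → p ≠ d →
          theta1 x τ s₂ (PY.l p) (PY.t p) (PY.r p) ≤
          theta1 x τ s₀ (PY.l p) (PY.t p) (PY.r p) := by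
        intro p hp1 hpk hpd
        apply theta1_mono (PY.sink_lb p hp1 hpk) (PY.sink_ub p hp1 hpk)
        intro j hj1 hj2
        have hdisj := PY.block_disjoint hp1 hpk hd1 hdk hpd hj1 hj2
        rw [← hl, ← hr] at hdisj
        have hjn : j ≤ n := le_trans hj2 (PY.r_le_n hp1 hpk)
        have hnot : ¬ (l ≤ j ∧ j ≤ i') := by
          rcases hdisj with h | h <;> omega
        simp only [hs₂def]
        rw [if_neg hnot]
        exact (hs₀sc j hjn).1
      obtain ⟨hwc, hdm⟩ := improve hs₀ hdom hsc2 hΔ0 hopt hblk hoth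
      refine ⟨s₂, d, hwc, hdm, ?_, Or.inl ⟨i' + 1, by omega, by omega, ?_, ?_⟩⟩
      · intro i _ hout
        rw [← hl, ← hr] at hout
        have hnot : ¬ (l ≤ i ∧ i ≤ i') := by
          rcases hout with h | h <;> omega
        simp only [hs₂def]
        rw [if_neg hnot]
      · intro j h1 h2
        simp only [hs₂def]
        rw [if_pos ⟨h1, by omega⟩]
      · intro j h1 h2
        simp only [hs₂def]
        rw [if_neg (by omega : ¬ (l ≤ j ∧ j ≤ i'))]
  · -- right side dominates in the dominant block
    push_neg at hc
    have hc2 : 0 < thetaR x τ s₀ t r :=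
      lt_of_le_of_lt (maxOver_nonneg _ _) hc
    obtain ⟨i', hi'mem, hi'eq, hi'max⟩ := maxOver_pos_attained (S := Finset.Ioc t r)
      (f := fun i => (x i - x t) * τ + ∑ j ∈ Finset.Icc i r, s₀ j) hc2
    rw [Finset.mem_Ioc] at hi'mem
    have hi'1 : t < i' := hi'mem.1
    have hi'2 : i' ≤ r := hi'mem.2
    set s₂ : ℕ → ℝ := fun j => if i' ≤ j ∧ j ≤ r then whi j else wlo j with hs₂def
    have hΔ0 : (0:ℝ) ≤ ∑ j ∈ Finset.Icc i' r, (whi j - s₀ j) := by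
      apply Finset.sum_nonneg
      intro j hj
      rw [Finset.mem_Icc] at hj
      have := (hs₀sc j (by omega)).2
      linarith
    have hδsum : ∑ j ∈ Finset.Icc 0 n, (if i' ≤ j ∧ j ≤ r then whi j - s₀ j else 0) =
        ∑ j ∈ Finset.Icc i' r, (whi j - s₀ j) := by
      rw [← Finset.sum_filter]
      congr 1
      ext j
      simp only [Finset.mem_filter, Finset.mem_Icc]
      omega
    have hsc2 : IsScenario n wlo whi s₂ := by
      intro i hi
      simp only [hs₂def]
      by_cases h : i' ≤ i ∧ i ≤ r
      · rw [if_pos h]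
        exact ⟨(hw i hi).2, le_rfl⟩
      · rw [if_neg h]
        exact ⟨le_rfl, (hw i hi).2⟩
    have hδle : ∀ j, j ≤ n →
        s₂ j ≤ s₀ j + (if i' ≤ j ∧ j ≤ r then whi j - s₀ j else 0) := by
      intro j hj
      simp only [hs₂def]
      by_cases h : i' ≤ j ∧ j ≤ r
      · rw [if_pos h, if_pos h]; linarith
      · rw [if_neg h, if_neg h, add_zero]; exact (hs₀sc j hj).1
    have hδ0 : ∀ j, j ≤ n → (0:ℝ) ≤ (if i' ≤ j ∧ j ≤ r then whi j - s₀ j else 0) := by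
      intro j hj
      by_cases h : i' ≤ j ∧ j ≤ r
      · rw [if_pos h]; have := (hs₀sc j hj).2; linarith
      · rw [if_neg h]
    have hopt := thetaOpt_shift x τ PY hδle hδ0
    rw [hδsum] at hopt
    have hsum2 : ∑ j ∈ Finset.Icc i' r, s₂ j =
        ∑ j ∈ Finset.Icc i' r, s₀ j + ∑ j ∈ Finset.Icc i' r, (whi j - s₀ j) := by
      have he : ∑ j ∈ Finset.Icc i' r, s₂ j = ∑ j ∈ Finset.Icc i' r, whi j := by
        apply Finset.sum_congr rfl
        intro j hj
        rw [Finset.mem_Icc] at hj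
        simp only [hs₂def]
        rw [if_pos ⟨hj.1, hj.2⟩]
      rw [he, Finset.sum_sub_distrib]
      ring
    have hblk : theta1 x τ s₀ l t r + ∑ j ∈ Finset.Icc i' r, (whi j - s₀ j) ≤
        theta1 x τ s₂ l t r := by
      have h1 : theta1 x τ s₀ l t r = thetaR x τ s₀ t r := max_eq_right (le_of_lt hc)
      have h2 : thetaR x τ s₀ t r = (x i' - x t) * τ + ∑ j ∈ Finset.Icc i' r, s₀ j :=
        hi'eq.symm
      have h3 : (x i' - x t) * τ + ∑ j ∈ Finset.Icc i' r, s₂ j ≤ thetaR x τ s₂ t r :=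
        le_maxOver (f := fun i => (x i - x t) * τ + ∑ j ∈ Finset.Icc i r, s₂ j)
          (Finset.mem_Ioc.2 hi'mem)
      have h4 : thetaR x τ s₂ t r ≤ theta1 x τ s₂ l t r := le_max_right _ _
      rw [h1, h2]
      rw [hsum2] at h3
      linarith
    have hoth : ∀ p, 1 ≤ p → p ≤ k → p ≠ d →
        theta1 x τ s₂ (PY.l p) (PY.t p) (PY.r p) ≤
        theta1 x τ s₀ (PY.l p) (PY.t p) (PY.r p) := by
      intro p hp1 hpk hpd
      apply theta1_mono (PY.sink_lb p hp1 hpk) (PY.sink_ub p hp1 hpk)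
      intro j hj1 hj2
      have hdisj := PY.block_disjoint hp1 hpk hd1 hdk hpd hj1 hj2
      rw [← hl, ← hr] at hdisj
      have hjn : j ≤ n := le_trans hj2 (PY.r_le_n hp1 hpk)
      have hnot : ¬ (i' ≤ j ∧ j ≤ r) := by
        rcases hdisj with h | h <;> omega
      simp only [hs₂def]
      rw [if_neg hnot]
      exact (hs₀sc j hjn).1
    obtain ⟨hwc, hdm⟩ := improve hs₀ hdom hsc2 hΔ0 hopt hblk hoth
    refine ⟨s₂, d, hwc, hdm, ?_, Or.inr ⟨i', by omega, by omega, ?_, ?_⟩⟩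
    · intro i _ hout
      rw [← hl, ← hr] at hout
      have hnot : ¬ (i' ≤ i ∧ i ≤ r) := by
        rcases hout with h | h <;> omega
      simp only [hs₂def]
      rw [if_neg hnot]
    · intro j h1 h2
      simp only [hs₂def]
      rw [if_neg (by omega : ¬ (i' ≤ j ∧ j ≤ r))]
    · intro j h1 h2
      simp only [hs₂def]
      rw [if_pos ⟨h1, h2⟩]
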